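/- arXiv:1703.01385 — 2 statements merged into one kernel-verified Lean document; each statement's English description precedes it below -/
import Mathlib

section
/- First quotient rule for Hasse–Teichmüller derivatives: let F be a field and f ∈ F[[z]] a nonzero formal power series, with multiplicative inverse 1/f taken in the field of formal Laurent series F((z)). Then for every n ≥ 1, H^{(n)}(1/f) = Σ_{k=1}^{n} ((−1)^k / f^{k+1}) Σ_{i_1,…,i_k ≥ 1, i_1+⋯+i_k = n} H^{(i_1)}(f) ⋯ H^{(i_k)}(f), where the inner sum is over all ordered k-tuples of positive integers with sum n. -/
/-!
First quotient rule for Hasse–Teichmüller derivatives on formal Laurent series.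
-/

noncomputable section

/-- The Hasse–Teichmüller derivative of order `n` on formal Laurent series:
it sends `Σ_{m ≥ R} a_m z^m` to `Σ_{m ≥ R} a_m (m choose n) z^{m-n}`, where
`(m choose n)` is the generalized (integer) binomial coefficient. -/
def hasseTeichmullerLS {F : Type*} [Field F] (n : ℕ) (f : LaurentSeries F) : LaurentSeries F where
  coeff m := ((Ring.choose (m + n : ℤ) n : ℤ) : F) * f.coeff (m + n)
  isPWO_support' := by
    refine Set.IsPWO.mono
      (f.isPWO_support.image_of_monotone
        (f := fun x : ℤ => x - (n : ℤ)) fun a b hab => by simpa using hab) ?_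
    intro m hm
    have hm' : f.coeff (m + n) ≠ 0 := by
      intro h
      simp [Function.mem_support, h] at hm
    exact ⟨m + n, hm', by ring⟩

namespace HTaux

variable {F : Type*} [Field F]

@[simp] lemma htl_coeff (n : ℕ) (f : LaurentSeries F) (m : ℤ) :
    (hasseTeichmullerLS n f).coeff m
      = ((Ring.choose (m + n : ℤ) n : ℤ) : F) * f.coeff (m + n) := rfl

lemma htl_zero_fun (n : ℕ) : hasseTeichmullerLS n (0 : LaurentSeries F) = 0 := by
  ext m; simp

@[simp] lemma htl_zero (f : LaurentSeries F) : hasseTeichmullerLS 0 f = f := by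
  ext m; simp [Ring.choose_zero_right]

lemma ring_choose_zero {n : ℕ} (hn : 1 ≤ n) : Ring.choose (0 : ℤ) n = 0 := by
  rw [show ((0:ℤ)) = ((0:ℕ):ℤ) by norm_num, Ring.choose_natCast]
  simp [Nat.choose_eq_zero_of_lt hn]

lemma htl_one {n : ℕ} (hn : 1 ≤ n) : hasseTeichmullerLS n (1 : LaurentSeries F) = 0 := by
  ext m
  simp only [htl_coeff, HahnSeries.coeff_zero]
  rcases eq_or_ne (m + (n : ℤ)) 0 with h | h
  · rw [h, ring_choose_zero hn]; simp
  · rw [HahnSeries.coeff_one, if_neg h]; simp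

lemma exists_bound (x : LaurentSeries F) : ∃ A : ℤ, x.support ⊆ Set.Ici A := by
  rcases Set.eq_empty_or_nonempty x.support with h | h
  · exact ⟨0, by simp [h]⟩
  · exact ⟨x.isWF_support.min h, fun a ha => x.isWF_support.min_le h ha⟩

lemma htl_support_subset {x : LaurentSeries F} {A : ℤ} (hx : x.support ⊆ Set.Ici A) (n : ℕ) :
    (hasseTeichmullerLS n x).support ⊆ Set.Ici (A - n) := by
  intro a ha
  have : x.coeff (a + n) ≠ 0 := by
    intro h
    apply ha
    simp [h]
  have := hx this
  simp only [Set.mem_Ici] at this ⊢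
  omega

lemma coeff_sum {α : Type*} (s : Finset α) (g : α → LaurentSeries F) (m : ℤ) :
    (∑ i ∈ s, g i).coeff m = ∑ i ∈ s, (g i).coeff m := by
  induction s using Finset.cons_induction with
  | empty => simp
  | cons a s ha ih => simp [Finset.sum_cons, ih]

lemma coeff_eq_zero_of_lt {x : LaurentSeries F} {A : ℤ} (hx : x.support ⊆ Set.Ici A)
    {a : ℤ} (h : a < A) : x.coeff a = 0 := by
  by_contra h'
  have := hx h'
  simp only [Set.mem_Ici] at this
  omega

/-- Multiplication coefficient formula as a sum over an interval. -/
lemma mul_coeff_Icc {x y : LaurentSeries F} {A B : ℤ}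
    (hx : x.support ⊆ Set.Ici A) (hy : y.support ⊆ Set.Ici B)
    (m lo hi : ℤ) (hlo : lo ≤ A) (hhi : m - B ≤ hi) :
    (x * y).coeff m = ∑ a ∈ Finset.Icc lo hi, x.coeff a * y.coeff (m - a) := by
  classical
  rw [HahnSeries.coeff_mul]
  set S := Finset.antidiagonal x.isPWO_support y.isPWO_support m with hS
  have hinj : ∀ p ∈ S, ∀ q ∈ S, p.1 = q.1 → p = q := by
    rintro ⟨p1, p2⟩ hp ⟨q1, q2⟩ hq (rfl : p1 = q1)
    rw [hS, Finset.mem_addAntidiagonal] at hp hq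
    have : p2 = q2 := by omega
    simp [this]
  have himage : S.image Prod.fst ⊆ Finset.Icc lo hi := by
    intro a ha
    obtain ⟨p, hp, rfl⟩ := Finset.mem_image.mp ha
    rw [hS, Finset.mem_addAntidiagonal] at hp
    have h1 := hx hp.1
    have h2 := hy hp.2.1
    simp only [Set.mem_Ici] at h1 h2
    rw [Finset.mem_Icc]
    omega
  have hsum : ∑ p ∈ S, x.coeff p.1 * y.coeff p.2
      = ∑ a ∈ S.image Prod.fst, x.coeff a * y.coeff (m - a) := by
    rw [Finset.sum_image hinj]
    refine Finset.sum_congr rfl fun p hp => ?_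
    rw [hS, Finset.mem_addAntidiagonal] at hp
    have : p.2 = m - p.1 := by omega
    rw [this]
  rw [hsum]
  refine Finset.sum_subset himage fun a ha hna => ?_
  by_contra hne
  apply hna
  have hx0 : x.coeff a ≠ 0 := fun h => hne (by rw [h, zero_mul])
  have hy0 : y.coeff (m - a) ≠ 0 := fun h => hne (by rw [h, mul_zero])
  refine Finset.mem_image.mpr ⟨(a, m - a), ?_, rfl⟩
  rw [hS, Finset.mem_addAntidiagonal]
  exact ⟨hx0, hy0, by ring⟩

/-- Leibniz rule for the Hasse–Teichmüller derivative. -/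
lemma htl_mul (n : ℕ) (x y : LaurentSeries F) :
    hasseTeichmullerLS n (x * y)
      = ∑ p ∈ Finset.HasAntidiagonal.antidiagonal n,
          hasseTeichmullerLS p.1 x * hasseTeichmullerLS p.2 y := by
  classical
  obtain ⟨A, hA⟩ := exists_bound x
  obtain ⟨B, hB⟩ := exists_bound y
  ext m
  rw [coeff_sum]
  -- Left side
  have hL : (hasseTeichmullerLS n (x * y)).coeff m
      = ∑ a ∈ Finset.Icc (A - n) (m + 2 * n - B),
          ((Ring.choose (m + n : ℤ) n : ℤ) : F) * (x.coeff a * y.coeff (m + n - a)) := by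
    rw [htl_coeff, mul_coeff_Icc hA hB (m + n) (A - n) (m + 2 * n - B) (by omega) (by omega),
      Finset.mul_sum]
  rw [hL]
  -- rewrite the binomial coefficient by Vandermonde
  have hV : ∀ a : ℤ, ((Ring.choose (m + n : ℤ) n : ℤ) : F)
      = ∑ p ∈ Finset.HasAntidiagonal.antidiagonal n,
          ((Ring.choose a p.1 : ℤ) : F) * ((Ring.choose (m + n - a) p.2 : ℤ) : F) := by
    intro a
    have h := Ring.add_choose_eq (r := a) (s := m + n - a) n (Commute.all _ _)
    rw [show a + (m + (n:ℤ) - a) = m + n by ring] at h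
    rw [h]
    push_cast
    rfl
  have hL2 : ∑ a ∈ Finset.Icc (A - n) (m + 2 * n - B),
        ((Ring.choose (m + n : ℤ) n : ℤ) : F) * (x.coeff a * y.coeff (m + n - a))
      = ∑ p ∈ Finset.HasAntidiagonal.antidiagonal n, ∑ a ∈ Finset.Icc (A - n) (m + 2 * n - B),
          (((Ring.choose a p.1 : ℤ) : F) * x.coeff a)
            * (((Ring.choose (m + n - a) p.2 : ℤ) : F) * y.coeff (m + n - a)) := by
    rw [Finset.sum_comm]
    refine Finset.sum_congr rfl fun a _ => ?_
    rw [hV a, Finset.sum_mul]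
    refine Finset.sum_congr rfl fun p _ => ?_
    ring
  rw [hL2]
  -- Right side: compute each product coefficient
  refine Finset.sum_congr rfl fun p hp => ?_
  rw [Finset.HasAntidiagonal.mem_antidiagonal] at hp
  have hp1 : p.1 ≤ n := by omega
  have hp2 : p.2 ≤ n := by omega
  have hx' := htl_support_subset hA p.1
  have hy' := htl_support_subset hB p.2
  rw [mul_coeff_Icc hx' hy' m (A - n) (m + n - B) (by omega) (by omega)]
  have hshift : (Finset.Icc (A - n + p.1) (m + n - B + p.1))
      = (Finset.Icc (A - n) (m + n - B)).map (addRightEmbedding (p.1 : ℤ)) := by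
    rw [Finset.map_add_right_Icc]
  have key : ∑ a ∈ Finset.Icc (A - n) (m + n - B),
        (hasseTeichmullerLS p.1 x).coeff a * (hasseTeichmullerLS p.2 y).coeff (m - a)
      = ∑ a ∈ Finset.Icc (A - n + p.1) (m + n - B + p.1),
          (((Ring.choose a p.1 : ℤ) : F) * x.coeff a)
            * (((Ring.choose (m + n - a) p.2 : ℤ) : F) * y.coeff (m + n - a)) := by
    rw [hshift, Finset.sum_map]
    refine Finset.sum_congr rfl fun a _ => ?_
    simp only [addRightEmbedding_apply, htl_coeff]
    rw [show m + (n:ℤ) - (a + (p.1:ℤ)) = (m - a) + (p.2:ℤ) by omega]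
  rw [key]
  refine (Finset.sum_subset (fun a ha => ?_) (fun a ha hna => ?_)).symm
  · rw [Finset.mem_Icc] at ha ⊢; omega
  · rw [Finset.mem_Icc] at ha hna
    push_neg at hna
    rcases lt_or_ge a A with h | h
    · rw [coeff_eq_zero_of_lt hA h]
      ring
    · have : m + (n:ℤ) - a < B := by omega
      rw [coeff_eq_zero_of_lt hB this]
      ring

/-- Sum over compositions of `n` into `k` positive parts of products of
Hasse–Teichmüller derivatives. -/
def compSum (u : LaurentSeries F) (k n : ℕ) : LaurentSeries F :=
  ∑ i ∈ (Finset.Nat.antidiagonalTuple k n).filter fun i => ∀ j, 1 ≤ i j,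
    ∏ j, hasseTeichmullerLS (i j) u

lemma compSum_eq_zero (u : LaurentSeries F) {k n : ℕ} (h : n < k) : compSum u k n = 0 := by
  rw [compSum]
  convert Finset.sum_empty
  rw [Finset.eq_empty_iff_forall_notMem]
  intro x hx
  rw [Finset.mem_filter, Finset.Nat.mem_antidiagonalTuple] at hx
  obtain ⟨h1, h2⟩ := hx
  have : (k : ℕ) ≤ ∑ j, x j := by
    calc (k : ℕ) = ∑ _j : Fin k, 1 := by simp
    _ ≤ ∑ j, x j := Finset.sum_le_sum fun j _ => h2 j
  omega

lemma compSum_one (u : LaurentSeries F) {n : ℕ} (hn : 1 ≤ n) :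
    compSum u 1 n = hasseTeichmullerLS n u := by
  rw [compSum, Finset.Nat.antidiagonalTuple_one, Finset.filter_singleton]
  rw [if_pos (fun j => by simpa using hn)]
  simp

lemma compSum_succ (u : LaurentSeries F) (k n : ℕ) :
    compSum u (k + 1) n
      = ∑ i ∈ Finset.Icc 1 n, hasseTeichmullerLS i u * compSum u k (n - i) := by
  classical
  simp only [compSum, Finset.mul_sum]
  rw [Finset.sum_sigma']
  refine Finset.sum_bij' (fun x _ => (⟨x 0, Fin.tail x⟩ : Σ _i : ℕ, Fin k → ℕ))
    (fun p _ => Fin.cons p.1 p.2) ?_ ?_ ?_ ?_ ?_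
  · intro x hx
    simp only [Finset.mem_filter, Finset.Nat.mem_antidiagonalTuple] at hx
    obtain ⟨hsum, hpos⟩ := hx
    have h0 : x 0 ≤ n := by
      rw [← hsum, Fin.sum_univ_succ]
      omega
    simp only [Finset.mem_sigma, Finset.mem_Icc, Finset.mem_filter,
      Finset.Nat.mem_antidiagonalTuple]
    refine ⟨⟨hpos 0, h0⟩, ?_, fun j => hpos j.succ⟩
    rw [← hsum, Fin.sum_univ_succ]
    simp only [Fin.tail]
    omega
  · rintro ⟨i, y⟩ hp
    simp only [Finset.mem_sigma, Finset.mem_Icc, Finset.mem_filter,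
      Finset.Nat.mem_antidiagonalTuple] at hp ⊢
    obtain ⟨⟨hi1, hi2⟩, hy, hpos⟩ := hp
    refine ⟨?_, ?_⟩
    · rw [Fin.sum_cons, hy]
      omega
    · intro j
      refine Fin.cases ?_ ?_ j
      · simpa using hi1
      · intro j'
        simpa using hpos j'
  · intro x _
    exact Fin.cons_self_tail x
  · rintro ⟨i, y⟩ _
    simp [Fin.tail_cons]
  · intro x _
    simp only [Fin.prod_univ_succ]
    rfl

lemma key_rec (u : LaurentSeries F) (hu : u ≠ 0) {n : ℕ} (hn : 1 ≤ n) :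
    hasseTeichmullerLS n u⁻¹ =
      -u⁻¹ * ∑ i ∈ Finset.Icc 1 n,
        hasseTeichmullerLS i u * hasseTeichmullerLS (n - i) u⁻¹ := by
  have h0 : (0 : LaurentSeries F)
      = ∑ p ∈ Finset.HasAntidiagonal.antidiagonal n,
          hasseTeichmullerLS p.1 u * hasseTeichmullerLS p.2 u⁻¹ := by
    rw [← htl_mul, mul_inv_cancel₀ hu, htl_one hn]
  rw [Finset.Nat.sum_antidiagonal_eq_sum_range_succ_mk, Finset.sum_range_succ'] at h0
  simp only [Nat.sub_zero, htl_zero] at h0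
  have hIcc : ∑ i ∈ Finset.Icc 1 n,
        hasseTeichmullerLS i u * hasseTeichmullerLS (n - i) u⁻¹
      = ∑ i ∈ Finset.range n,
          hasseTeichmullerLS (i + 1) u * hasseTeichmullerLS (n - (i + 1)) u⁻¹ := by
    rw [← Finset.Ico_add_one_right_eq_Icc, Finset.sum_Ico_eq_sum_range]
    exact Finset.sum_congr rfl fun i _ => by rw [add_comm 1 i]
  rw [hIcc]
  refine mul_left_cancel₀ hu ?_
  rw [show u * (-u⁻¹ * ∑ i ∈ Finset.range n,
        hasseTeichmullerLS (i + 1) u * hasseTeichmullerLS (n - (i + 1)) u⁻¹)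
      = -((u * u⁻¹) * ∑ i ∈ Finset.range n,
        hasseTeichmullerLS (i + 1) u * hasseTeichmullerLS (n - (i + 1)) u⁻¹) by ring,
    mul_inv_cancel₀ hu, one_mul]
  exact eq_neg_of_add_eq_zero_left (by rw [add_comm]; exact h0.symm)

theorem aux (u : LaurentSeries F) (hu : u ≠ 0) (n : ℕ) :
    1 ≤ n → hasseTeichmullerLS n u⁻¹ =
      ∑ k ∈ Finset.Icc 1 n, ((-1) ^ k / u ^ (k + 1)) * compSum u k n := by
  induction n using Nat.strong_induction_on with
  | _ n IH =>
  intro hn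
  rw [key_rec u hu hn]
  obtain ⟨m, rfl⟩ : ∃ m, n = m + 1 := ⟨n - 1, by omega⟩
  rw [Finset.sum_Icc_succ_top (by omega : 1 ≤ m + 1)]
  simp only [Nat.sub_self, htl_zero]
  have hS1 : ∀ i ∈ Finset.Icc 1 m, hasseTeichmullerLS (m + 1 - i) u⁻¹
      = ∑ k ∈ Finset.Icc 1 m, ((-1) ^ k / u ^ (k + 1)) * compSum u k (m + 1 - i) := by
    intro i hi
    rw [Finset.mem_Icc] at hi
    rw [IH (m + 1 - i) (by omega) (by omega)]
    refine Finset.sum_subset (fun k hk => ?_) (fun k hk hnk => ?_)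
    · rw [Finset.mem_Icc] at hk ⊢
      omega
    · rw [Finset.mem_Icc] at hk hnk
      rw [compSum_eq_zero u (by omega), mul_zero]
  have e1 : ∑ i ∈ Finset.Icc 1 m,
        hasseTeichmullerLS i u * hasseTeichmullerLS (m + 1 - i) u⁻¹
      = ∑ i ∈ Finset.Icc 1 m, ∑ k ∈ Finset.Icc 1 m,
          hasseTeichmullerLS i u
            * (((-1) ^ k / u ^ (k + 1)) * compSum u k (m + 1 - i)) :=
    Finset.sum_congr rfl fun i hi => by rw [hS1 i hi, Finset.mul_sum]
  have e2 : ∑ k ∈ Finset.Icc 1 (m + 1), ((-1) ^ k / u ^ (k + 1)) * compSum u k (m + 1)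
      = ((-1) / u ^ 2) * hasseTeichmullerLS (m + 1) u
        + ∑ k ∈ Finset.Icc 1 m, ((-1) ^ (k + 1) / u ^ (k + 2))
            * ∑ i ∈ Finset.Icc 1 m,
                hasseTeichmullerLS i u * compSum u k (m + 1 - i) := by
    rw [show Finset.Icc 1 (m + 1) = insert 1 (Finset.Icc 2 (m + 1)) by
        ext x; simp only [Finset.mem_insert, Finset.mem_Icc]; omega,
      Finset.sum_insert (by simp [Finset.mem_Icc])]
    congr 1
    · rw [compSum_one u (by omega : 1 ≤ m + 1)]
      norm_num
    · rw [show Finset.Icc 2 (m + 1) = (Finset.Icc 1 m).map (addRightEmbedding 1) from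
          (Finset.map_add_right_Icc 1 m 1).symm, Finset.sum_map]
      refine Finset.sum_congr rfl fun k hk => ?_
      rw [Finset.mem_Icc] at hk
      rw [addRightEmbedding_apply, compSum_succ,
        Finset.sum_Icc_succ_top (by omega : 1 ≤ m + 1),
        Nat.sub_self, compSum_eq_zero u (by omega : 0 < k), mul_zero, add_zero]
  rw [e1, e2, mul_add, add_comm (((-1) / u ^ 2) * hasseTeichmullerLS (m + 1) u) _]
  congr 1
  · simp only [Finset.mul_sum]
    rw [Finset.sum_comm]
    refine Finset.sum_congr rfl fun k _ => ?_
    refine Finset.sum_congr rfl fun i _ => ?_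
    ring
  · ring

end HTaux

/-- first quotient rule.  For a nonzero power series `f` over a field `F`,
whose inverse is taken in the field of formal Laurent series, and `n ≥ 1`,
`H^{(n)}(1/f) = Σ_{k=1}^{n} ((−1)^k / f^{k+1})
  Σ_{i_1,…,i_k ≥ 1, i_1+⋯+i_k = n} H^{(i_1)}(f) ⋯ H^{(i_k)}(f)`. -/
theorem hasseTeichmuller_inv {F : Type*} [Field F] (f : PowerSeries F) (hf : f ≠ 0)
    (n : ℕ) (hn : 1 ≤ n) :
    hasseTeichmullerLS n ((f : LaurentSeries F)⁻¹) =
      ∑ k ∈ Finset.Icc 1 n, ((-1) ^ k / (f : LaurentSeries F) ^ (k + 1)) *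
        ∑ i ∈ (Finset.Nat.antidiagonalTuple k n).filter fun i => ∀ j, 1 ≤ i j,
          ∏ j, hasseTeichmullerLS (i j) (f : LaurentSeries F) := by
  have hu : (f : LaurentSeries F) ≠ 0 := fun h =>
    hf (HahnSeries.ofPowerSeries_injective (Γ := ℤ) (R := F)
      (by rw [map_zero]; exact h))
  have := HTaux.aux (f : LaurentSeries F) hu n hn
  simpa only [HTaux.compSum] using this

end
end

section
/- Explicit formula for truncated Bernoulli–Carlitz numbers: for every integer N ≥ 0 and every n ≥ 1, BC_{N,n} = Π(n) Σ_{k=1}^{n} (−D_N)^k Σ_{i_1,…,i_k ≥ 1, r^{N+i_1}+⋯+r^{N+i_k} = n + k r^N} 1/(D_{N+i_1} ⋯ D_{N+i_k}), where the inner sum is over all ordered k-tuples of positive integers (i_1,…,i_k) with r^{N+i_1}+⋯+r^{N+i_k} = n + k r^N. -/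
/-!
Carlitz module: `Fq` is a finite field with `r = Fintype.card Fq` elements (so `r` is a
power of a prime `p`), and `K = Fq(T)` is the field of rational functions over `Fq`.
-/

noncomputable section

variable (Fq : Type*) [Field Fq] [Fintype Fq]

/-- `r`, the number of elements of the finite field `Fq` (a prime power). -/
def rq : ℕ := Fintype.card Fq

/-- `[i] = T^{r^i} − T` in `K = Fq(T)`. -/
def carlitzBracket (i : ℕ) : RatFunc Fq := RatFunc.X ^ rq Fq ^ i - RatFunc.X

/-- `D_0 = 1`, `D_i = [i]·D_{i−1}^r`. -/
def carlitzD : ℕ → RatFunc Fq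
  | 0 => 1
  | i + 1 => carlitzBracket Fq (i + 1) * carlitzD i ^ rq Fq

/-- `L_0 = 1`, `L_i = [i]·L_{i−1}`. -/
def carlitzL : ℕ → RatFunc Fq
  | 0 => 1
  | i + 1 => carlitzBracket Fq (i + 1) * carlitzL i

/-- The Carlitz factorial `Π(i) = ∏_j D_j^{c_j}`, where `i = Σ_j c_j r^j` with
`0 ≤ c_j < r` is the base-`r` expansion of `i`. -/
def carlitzPi (i : ℕ) : RatFunc Fq :=
  ∏ j ∈ Finset.range (i + 1), carlitzD Fq j ^ (Nat.digits (rq Fq) i).getD j 0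

/-- The power series `Σ_{j=0}^∞ (D_N/D_{N+j}) x^{r^{N+j} − r^N}`, i.e.
`(e_C(x) − Σ_{i=0}^{N−1} x^{r^i}/D_i)·D_N/x^{r^N}`; it has constant term `1`. -/
def bcSeries (N : ℕ) : PowerSeries (RatFunc Fq) :=
  PowerSeries.mk fun m => ∑ j ∈ Finset.range (m + 1),
    if m = rq Fq ^ (N + j) - rq Fq ^ N then carlitzD Fq N / carlitzD Fq (N + j) else 0

/-- The truncated Bernoulli–Carlitz number `BC_{N,n}`: `BC_{N,n}/Π(n)` is the `n`-th
coefficient of the multiplicative inverse of the power series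
`Σ_{j=0}^∞ (D_N/D_{N+j}) x^{r^{N+j} − r^N}`. -/
def truncBC (N n : ℕ) : RatFunc Fq :=
  carlitzPi Fq n * PowerSeries.coeff n (bcSeries Fq N)⁻¹

/-- The power series `Σ_{j=0}^∞ (−1)^j (L_N/L_{N+j}) x^{r^{N+j} − r^N}`, i.e.
`(log_C(x) − Σ_{i=0}^{N−1} (−1)^i x^{r^i}/L_i)·(−1)^N L_N/x^{r^N}`;
it has constant term `1`. -/
def ccSeries (N : ℕ) : PowerSeries (RatFunc Fq) :=
  PowerSeries.mk fun m => ∑ j ∈ Finset.range (m + 1),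
    if m = rq Fq ^ (N + j) - rq Fq ^ N then
      (-1) ^ j * carlitzL Fq N / carlitzL Fq (N + j) else 0

/-- The truncated Cauchy–Carlitz number `CC_{N,n}`: `CC_{N,n}/Π(n)` is the `n`-th
coefficient of the multiplicative inverse of the power series
`Σ_{j=0}^∞ (−1)^j (L_N/L_{N+j}) x^{r^{N+j} − r^N}`. -/
def truncCC (N n : ℕ) : RatFunc Fq :=
  carlitzPi Fq n * PowerSeries.coeff n (ccSeries Fq N)⁻¹

/-- The tail `e_C(z) − 𝓔_{N−1}(z) = Σ_{i=N}^∞ z^{r^i}/D_i` of the Carlitz exponential. -/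
def carlitzExpTail (N : ℕ) : PowerSeries (RatFunc Fq) :=
  PowerSeries.mk fun m => ∑ j ∈ Finset.range (m + 1),
    if m = rq Fq ^ (N + j) then (carlitzD Fq (N + j))⁻¹ else 0

/-- The associated Stirling–Carlitz number of the second kind `{n brace k}_{C,≥N}`,
defined by `(e_C(z) − 𝓔_{N−1}(z))^k/Π(k) = Σ_n {n brace k}_{C,≥N} z^n/Π(n)`. -/
def stirling2C (N k n : ℕ) : RatFunc Fq :=
  carlitzPi Fq n / carlitzPi Fq k * PowerSeries.coeff n (carlitzExpTail Fq N ^ k)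

/-- The tail `log_C(z) − 𝓕_{N−1}(z) = Σ_{i=N}^∞ (−1)^i z^{r^i}/L_i` of the Carlitz
logarithm. -/
def carlitzLogTail (N : ℕ) : PowerSeries (RatFunc Fq) :=
  PowerSeries.mk fun m => ∑ j ∈ Finset.range (m + 1),
    if m = rq Fq ^ (N + j) then (-1) ^ (N + j) * (carlitzL Fq (N + j))⁻¹ else 0

/-- The associated Stirling–Carlitz number of the first kind `{n brack k}_{C,≥N}`,
defined by `(log_C(z) − 𝓕_{N−1}(z))^k/Π(k) = Σ_n {n brack k}_{C,≥N} z^n/Π(n)`. -/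
def stirling1C (N k n : ℕ) : RatFunc Fq :=
  carlitzPi Fq n / carlitzPi Fq k * PowerSeries.coeff n (carlitzLogTail Fq N ^ k)

open PowerSeries Finset

lemma two_le_rq : 2 ≤ rq Fq := Fintype.one_lt_card

lemma carlitzBracket_ne_zero {i : ℕ} (hi : 1 ≤ i) : carlitzBracket Fq i ≠ 0 := by
  have h2 : 2 ≤ rq Fq ^ i := le_trans (two_le_rq Fq)
    (by calc rq Fq = rq Fq ^ 1 := (pow_one _).symm
          _ ≤ rq Fq ^ i := Nat.pow_le_pow_right (by have := two_le_rq Fq; omega) hi)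
  have : carlitzBracket Fq i
      = algebraMap (Polynomial Fq) (RatFunc Fq) (Polynomial.X ^ rq Fq ^ i - Polynomial.X) := by
    simp [carlitzBracket, map_sub, map_pow, RatFunc.algebraMap_X]
  rw [this]
  apply RatFunc.algebraMap_ne_zero
  rw [sub_ne_zero]
  intro hXX
  have := congrArg Polynomial.natDegree hXX
  rw [Polynomial.natDegree_X_pow, Polynomial.natDegree_X] at this
  omega

lemma carlitzD_ne_zero : ∀ i, carlitzD Fq i ≠ 0
  | 0 => one_ne_zero
  | (i + 1) => mul_ne_zero (carlitzBracket_ne_zero Fq (Nat.succ_le_succ (Nat.zero_le i)))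
      (pow_ne_zero _ (carlitzD_ne_zero i))

/-- exponent `e_N(i) = r^{N+i} - r^N`. -/
def eN (N i : ℕ) : ℕ := rq Fq ^ (N + i) - rq Fq ^ N

lemma eN_strictMono (N : ℕ) : StrictMono (eN Fq N) := by
  intro i j hij
  have h1 : rq Fq ^ N ≤ rq Fq ^ (N + i) :=
    Nat.pow_le_pow_right (by have := two_le_rq Fq; omega) (Nat.le_add_right _ _)
  have h2 : rq Fq ^ (N + i) < rq Fq ^ (N + j) :=
    Nat.pow_lt_pow_right (two_le_rq Fq) (by omega)
  exact Nat.sub_lt_sub_right h1 h2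

lemma eN_add (N i : ℕ) : eN Fq N i + rq Fq ^ N = rq Fq ^ (N + i) :=
  Nat.sub_add_cancel (Nat.pow_le_pow_right (by have := two_le_rq Fq; omega) (Nat.le_add_right _ _))

lemma le_eN (N i : ℕ) : i ≤ eN Fq N i := (eN_strictMono Fq N).le_apply

lemma eN_pos (N : ℕ) {i : ℕ} (hi : 1 ≤ i) : 1 ≤ eN Fq N i := by
  have : eN Fq N 0 < eN Fq N i := eN_strictMono Fq N (by omega)
  have h0 : eN Fq N 0 = 0 := by simp [eN]
  omega

lemma coeff_bcSeries_eN (N : ℕ) {i : ℕ} (hi : 1 ≤ i) :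
    PowerSeries.coeff (eN Fq N i) (bcSeries Fq N)
      = carlitzD Fq N / carlitzD Fq (N + i) := by
  rw [bcSeries, coeff_mk, Finset.sum_eq_single i]
  · rw [show eN Fq N i = rq Fq ^ (N + i) - rq Fq ^ N from rfl, if_pos rfl]
  · intro j _ hne
    rw [if_neg]
    intro hc
    exact hne ((eN_strictMono Fq N).injective hc.symm)
  · intro hmem
    exact absurd (Finset.mem_range.mpr (Nat.lt_succ_of_le (le_eN Fq N i))) hmem

lemma coeff_bcSeries_zero (N m : ℕ) (h0 : m ≠ 0) (hm : ¬ ∃ i, 1 ≤ i ∧ m = eN Fq N i) :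
    PowerSeries.coeff m (bcSeries Fq N) = 0 := by
  rw [bcSeries, coeff_mk]
  apply Finset.sum_eq_zero
  intro j _
  rw [if_neg]
  intro hc
  rcases Nat.eq_zero_or_pos j with rfl | hj
  · simp [eN] at hc; omega
  · exact hm ⟨j, hj, hc⟩

lemma constantCoeff_bcSeries (N : ℕ) :
    PowerSeries.constantCoeff (bcSeries Fq N) = 1 := by
  rw [← coeff_zero_eq_constantCoeff_apply, bcSeries, coeff_mk]
  simp [div_self (carlitzD_ne_zero Fq N)]

lemma coeff_inv_eq_sum {K : Type*} [Field K] (f : PowerSeries K)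
    (hf : PowerSeries.constantCoeff f = 1) {n : ℕ} (hn : 1 ≤ n) :
    PowerSeries.coeff n f⁻¹
      = ∑ k ∈ Icc 1 n, (-1 : K) ^ k * PowerSeries.coeff n ((f - 1) ^ k) := by
  have hne : PowerSeries.constantCoeff f ≠ 0 := by rw [hf]; exact one_ne_zero
  set h : PowerSeries K := 1 - f with hh
  have geom : f * ∑ k ∈ range (n + 1), h ^ k = 1 - h ^ (n + 1) := by
    have hg := geom_sum_mul h (n + 1)
    have hfh : f = 1 - h := by rw [hh]; ring
    rw [hfh]
    linear_combination -hg
  have key : f⁻¹ = (∑ k ∈ range (n + 1), h ^ k) + f⁻¹ * h ^ (n + 1) := by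
    calc f⁻¹ = f⁻¹ * (f * ∑ k ∈ range (n + 1), h ^ k + h ^ (n + 1)) := by
          rw [geom]; ring
      _ = (f⁻¹ * f) * (∑ k ∈ range (n + 1), h ^ k) + f⁻¹ * h ^ (n + 1) := by ring
      _ = _ := by rw [PowerSeries.inv_mul_cancel f hne, one_mul]
  have hco : PowerSeries.coeff n (f⁻¹ * h ^ (n + 1)) = 0 := by
    have hX : (PowerSeries.X : PowerSeries K) ^ (n + 1) ∣ h ^ (n + 1) :=
      pow_dvd_pow_of_dvd (PowerSeries.X_dvd_iff.mpr (by simp [hh, hf])) _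
    have : (PowerSeries.X : PowerSeries K) ^ (n + 1) ∣ f⁻¹ * h ^ (n + 1) := hX.mul_left _
    exact PowerSeries.X_pow_dvd_iff.mp this n (Nat.lt_succ_self n)
  rw [key, map_add, hco, add_zero, map_sum]
  rw [Finset.range_eq_Ico, Finset.sum_eq_sum_Ico_succ_bot (Nat.succ_pos n)]
  rw [pow_zero, Nat.succ_eq_add_one, Finset.Ico_add_one_right_eq_Icc]
  have h0 : PowerSeries.coeff n (1 : PowerSeries K) = 0 := by
    rw [PowerSeries.coeff_one, if_neg (by omega)]
  rw [h0, zero_add]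
  apply Finset.sum_congr rfl
  intro k _
  have hne2 : h = -(f - 1) := by rw [hh]; ring
  have : h ^ k = (-1 : PowerSeries K) ^ k * (f - 1) ^ k := by rw [hne2, neg_pow]
  have hc : ((-1 : PowerSeries K) ^ k) = PowerSeries.C ((-1 : K) ^ k) := by
    rw [map_pow, map_neg, map_one]
  rw [this, hc, PowerSeries.coeff_C_mul]

/-- inverse of `eN`. -/
def idxN (N m : ℕ) : ℕ := Nat.log (rq Fq) (m + rq Fq ^ N) - N

lemma idxN_eN (N i : ℕ) : idxN Fq N (eN Fq N i) = i := by
  rw [idxN, eN_add, Nat.log_pow (two_le_rq Fq)]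
  omega

lemma coeff_sub_one_eq_zero (N m : ℕ) (hm : ¬ ∃ i, 1 ≤ i ∧ m = eN Fq N i) :
    PowerSeries.coeff m (bcSeries Fq N - 1) = 0 := by
  rw [map_sub, PowerSeries.coeff_one]
  rcases Nat.eq_zero_or_pos m with rfl | h0
  · rw [if_pos rfl, coeff_zero_eq_constantCoeff_apply, constantCoeff_bcSeries, sub_self]
  · rw [if_neg (by omega), coeff_bcSeries_zero Fq N m (by omega) hm, sub_zero]

lemma coeff_sub_one_eN (N : ℕ) {i : ℕ} (hi : 1 ≤ i) :
    PowerSeries.coeff (eN Fq N i) (bcSeries Fq N - 1)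
      = carlitzD Fq N * (carlitzD Fq (N + i))⁻¹ := by
  have hp := eN_pos Fq N hi
  rw [map_sub, PowerSeries.coeff_one, if_neg (by omega), sub_zero,
    coeff_bcSeries_eN Fq N hi, div_eq_mul_inv]

lemma coeff_pow_sub_one (N k n : ℕ) (hk : 1 ≤ k) (hn : 1 ≤ n) :
    PowerSeries.coeff n ((bcSeries Fq N - 1) ^ k)
      = carlitzD Fq N ^ k *
        ∑ᶠ (i : Fin k → ℕ)
          (_ : (∀ j, 1 ≤ i j) ∧ ∑ j, rq Fq ^ (N + i j) = n + k * rq Fq ^ N),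
          ∏ j, (carlitzD Fq (N + i j))⁻¹ := by
  classical
  set M := n + k * rq Fq ^ N with hM
  set P : (Fin k → ℕ) → Prop := fun i => (∀ j, 1 ≤ i j) ∧ ∑ j, rq Fq ^ (N + i j) = M with hP
  set g : (Fin k → ℕ) → RatFunc Fq := fun i => ∏ j, (carlitzD Fq (N + i j))⁻¹ with hg
  have bound : ∀ i : Fin k → ℕ, P i → ∀ j, i j < M := by
    intro i hPi j
    have h1 : rq Fq ^ (N + i j) ≤ M := by
      rw [← hPi.2]
      exact Finset.single_le_sum (f := fun j => rq Fq ^ (N + i j))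
        (fun _ _ => Nat.zero_le _) (mem_univ j)
    have h2 : N + i j < rq Fq ^ (N + i j) := Nat.lt_pow_self (two_le_rq Fq)
    omega
  -- Step A : the finsum equals a finite sum over a filtered finset
  have stepA : (∑ᶠ (i : Fin k → ℕ) (_ : P i), g i)
      = ∑ i ∈ (Fintype.piFinset fun _ : Fin k => range M).filter P, g i := by
    have hsupp : Function.support (fun i : Fin k → ℕ => ∑ᶠ (_ : P i), g i) ⊆
        ↑(Fintype.piFinset fun _ : Fin k => range M) := by
      intro i hi
      rw [Function.mem_support, finsum_eq_if] at hi
      have hPi : P i := by by_contra hc; rw [if_neg hc] at hi; exact hi rfl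
      simp only [Finset.coe_sort_coe, Finset.mem_coe, Fintype.mem_piFinset, mem_range]
      exact fun j => bound i hPi j
    rw [finsum_eq_sum_of_support_subset _ hsupp, Finset.sum_filter]
    exact Finset.sum_congr rfl fun i _ => finsum_eq_if
  rw [stepA]
  -- Step B : express the coefficient via `coeff_pow` and restrict the sum
  set Q : (ℕ →₀ ℕ) → Prop := fun l => ∀ j ∈ range k, ∃ i, 1 ≤ i ∧ l j = eN Fq N i with hQdef
  have stepB : PowerSeries.coeff n ((bcSeries Fq N - 1) ^ k)
      = ∑ l ∈ (Finset.finsuppAntidiag (range k) n).filter Q,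
          ∏ j ∈ range k, PowerSeries.coeff (l j) (bcSeries Fq N - 1) := by
    rw [PowerSeries.coeff_pow]
    refine (Finset.sum_filter_of_ne ?_).symm
    intro l _ hne j hj
    by_contra hcon
    exact hne (Finset.prod_eq_zero hj (coeff_sub_one_eq_zero Fq N (l j) hcon))
  rw [stepB, Finset.mul_sum]
  set F : (Fin k → ℕ) → (ℕ →₀ ℕ) := fun i => Finsupp.onFinset (range k)
      (fun m => if hm : m < k then eN Fq N (i ⟨m, hm⟩) else 0)
      (fun m h => by rw [mem_range]; by_contra hc; exact h (dif_neg hc)) with hFdef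
  set G : (ℕ →₀ ℕ) → (Fin k → ℕ) := fun l j => idxN Fq N (l j) with hGdef
  have hFapp : ∀ (i : Fin k → ℕ) (j : Fin k), F i (j : ℕ) = eN Fq N (i j) := by
    intro i j
    rw [hFdef]
    simp only [Finsupp.onFinset_apply]
    rw [dif_pos j.isLt, Fin.eta]
  have hwit : ∀ l : ℕ →₀ ℕ, Q l → ∀ j : Fin k,
      1 ≤ idxN Fq N (l j) ∧ (l j : ℕ) = eN Fq N (idxN Fq N (l j)) := by
    intro l hQl j
    obtain ⟨i, hi1, hie⟩ := hQl j (mem_range.mpr j.isLt)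
    rw [hie, idxN_eN]
    exact ⟨hi1, rfl⟩
  refine Finset.sum_bij' (fun l _ => G l) (fun i _ => F i) ?_ ?_ ?_ ?_ ?_
  · -- forward membership
    intro l hl
    rw [Finset.mem_filter, Finset.mem_finsuppAntidiag] at hl
    obtain ⟨⟨hsum, hsupp⟩, hQl⟩ := hl
    have hw := hwit l hQl
    have hPnew : P (G l) := by
      constructor
      · exact fun j => (hw j).1
      · have heach : ∀ j : Fin k, rq Fq ^ (N + G l j) = l j + rq Fq ^ N := by
          intro j
          rw [hGdef]
          rw [← eN_add Fq N (idxN Fq N (l j)), ← (hw j).2]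
        rw [Finset.sum_congr rfl fun j _ => heach j, Finset.sum_add_distrib,
          Finset.sum_const, card_univ, Fintype.card_fin, smul_eq_mul,
          Fin.sum_univ_eq_sum_range (fun m => (l m : ℕ)) k, hsum, hM]
    rw [Finset.mem_filter]
    exact ⟨Fintype.mem_piFinset.mpr fun j => mem_range.mpr (bound _ hPnew j), hPnew⟩
  · -- backward membership
    intro i hi
    rw [Finset.mem_filter] at hi
    obtain ⟨_, hP1, hP2⟩ := hi
    rw [Finset.mem_filter, Finset.mem_finsuppAntidiag]
    refine ⟨⟨?_, Finsupp.support_onFinset_subset⟩, ?_⟩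
    · rw [← Fin.sum_univ_eq_sum_range (fun m => (F i) m) k]
      rw [Finset.sum_congr rfl fun j _ => hFapp i j]
      have hsum2 : ∑ j : Fin k, (eN Fq N (i j) + rq Fq ^ N) = n + k * rq Fq ^ N := by
        rw [Finset.sum_congr rfl fun j _ => eN_add Fq N (i j), hP2]
      rw [Finset.sum_add_distrib, Finset.sum_const, card_univ, Fintype.card_fin,
        smul_eq_mul] at hsum2
      omega
    · intro m hm
      rw [mem_range] at hm
      refine ⟨i ⟨m, hm⟩, hP1 _, ?_⟩
      have := hFapp i ⟨m, hm⟩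
      exact this
  · -- left inverse
    intro l hl
    rw [Finset.mem_filter, Finset.mem_finsuppAntidiag] at hl
    obtain ⟨⟨hsum, hsupp⟩, hQl⟩ := hl
    have hw := hwit l hQl
    ext m
    by_cases hm : m < k
    · have h1 : F (G l) m = eN Fq N (G l ⟨m, hm⟩) := hFapp (G l) ⟨m, hm⟩
      rw [h1, hGdef]
      exact ((hw ⟨m, hm⟩).2).symm
    · have h1 : F (G l) m = 0 := by
        rw [hFdef]
        simp only [Finsupp.onFinset_apply]
        rw [dif_neg hm]
      rw [h1]
      by_contra hc
      have hmem : m ∈ l.support := Finsupp.mem_support_iff.mpr fun h => hc h.symm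
      have := hsupp hmem
      rw [mem_range] at this
      omega
  · -- right inverse
    intro i _
    funext j
    show idxN Fq N (F i (j : ℕ)) = i j
    rw [hFapp i j, idxN_eN]
  · -- values agree
    intro l hl
    rw [Finset.mem_filter, Finset.mem_finsuppAntidiag] at hl
    obtain ⟨⟨hsum, hsupp⟩, hQl⟩ := hl
    have hw := hwit l hQl
    calc ∏ j ∈ range k, PowerSeries.coeff (l j) (bcSeries Fq N - 1)
        = ∏ j : Fin k, PowerSeries.coeff (l j) (bcSeries Fq N - 1) :=
          (Fin.prod_univ_eq_prod_range
            (fun m => PowerSeries.coeff (l m) (bcSeries Fq N - 1)) k).symm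
      _ = ∏ j : Fin k, (carlitzD Fq N * (carlitzD Fq (N + idxN Fq N (l j)))⁻¹) := by
          refine Finset.prod_congr rfl fun j _ => ?_
          obtain ⟨hw1, hw2⟩ := hw j
          rw [hw2, idxN_eN]
          exact coeff_sub_one_eN Fq N hw1
      _ = carlitzD Fq N ^ k * g (G l) := by
          rw [Finset.prod_mul_distrib, Finset.prod_const, card_univ, Fintype.card_fin]


/-- explicit formula for the truncated Bernoulli–Carlitz numbers. -/
theorem truncBC_explicit (N n : ℕ) (hn : 1 ≤ n) :
    truncBC Fq N n =
      carlitzPi Fq n * ∑ k ∈ Finset.Icc 1 n, (-carlitzD Fq N) ^ k *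
        ∑ᶠ (i : Fin k → ℕ)
          (_ : (∀ j, 1 ≤ i j) ∧ ∑ j, rq Fq ^ (N + i j) = n + k * rq Fq ^ N),
          ∏ j, (carlitzD Fq (N + i j))⁻¹ := by
  rw [truncBC]
  congr 1
  rw [coeff_inv_eq_sum (bcSeries Fq N) (constantCoeff_bcSeries Fq N) hn]
  refine Finset.sum_congr rfl fun k hk => ?_
  rw [Finset.mem_Icc] at hk
  rw [coeff_pow_sub_one Fq N k n hk.1 hn, neg_pow]
  ring

end
end
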